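/- arXiv:1601.01161 — 3 statements merged into one kernel-verified Lean document; each statement's English description precedes it below -/
import Mathlib

section
/- Let f ∈ K⟨⟨e0,e1⟩⟩ satisfy f[w ⧢ e1] = 0 for every word w. Then for every word w and every integer n ≥ 1, n·f[e1^n e0 w] + f[e1^{n−1} e0 (e1 ⧢ w)] = 0, where e1^{n−1} e0 (e1 ⧢ w) denotes the ℤ-linear combination of words obtained by concatenating the prefix e1^{n−1} e0 to each word occurring in the shuffle e1 ⧢ w. -/
/-! Infrastructure: noncommutative formal power series in two letters `e0, e1`,
their ring structure, exponential, inverse, substitution, shuffle products,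
and the various words and submodules of coefficients used in the statements. -/

/-- Words over the alphabet `{e0, e1}`: lists over `Fin 2` (`0` is `e0`, `1` is `e1`),
read from left to right. -/
abbrev Word : Type := List (Fin 2)

/-- The depth of a word: its number of letters `e1`. -/
def depth (w : Word) : ℕ := w.count 1

/-- Noncommutative formal power series in `e0, e1` over `K`, encoded by their
coefficient functions on words. -/
def NCS (K : Type*) : Type _ := Word → K

namespace NCS

variable {K : Type*} [CommRing K]

instance : AddCommGroup (NCS K) := Pi.addCommGroup
instance : SMul K (NCS K) := ⟨fun c f => fun w => c * f w⟩
instance : One (NCS K) := ⟨fun w => if w = [] then 1 else 0⟩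
/-- Multiplication of noncommutative power series (Cauchy product on words). -/
instance : Mul (NCS K) := ⟨fun f g => fun w =>
  ∑ i ∈ Finset.range (w.length + 1), f (w.take i) * g (w.drop i)⟩

lemma mul_apply (f g : NCS K) (w : Word) :
    (f * g) w = ∑ i ∈ Finset.range (w.length + 1), f (w.take i) * g (w.drop i) := rfl

lemma add_apply (f g : NCS K) (w : Word) : (f + g) w = f w + g w := rfl

lemma smul_apply (c : K) (f : NCS K) (w : Word) : (c • f) w = c * f w := rfl

lemma zero_apply (w : Word) : (0 : NCS K) w = 0 := rfl

lemma one_apply (w : Word) : (1 : NCS K) w = if w = [] then 1 else 0 := rfl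

/-- Left shift of the coefficient function by a letter. -/
def shift (a : Fin 2) (f : NCS K) : NCS K := fun w => f (a :: w)

lemma mul_nil (f g : NCS K) : (f * g) [] = f [] * g [] := by
  simp [mul_apply]

lemma cons_mul (f g : NCS K) (a : Fin 2) (w : Word) :
    (f * g) (a :: w) = f [] * g (a :: w) + (shift a f * g) w := by
  show (∑ i ∈ Finset.range (w.length + 1 + 1), f ((a :: w).take i) * g ((a :: w).drop i)) = _
  rw [Finset.sum_range_succ']
  simp only [List.take_succ_cons, List.drop_succ_cons, List.take_zero, List.drop_zero]
  rw [add_comm]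
  rfl

private lemma zero_mul' (f : NCS K) : 0 * f = 0 := by
  funext w; simp [mul_apply, zero_apply]

private lemma mul_zero' (f : NCS K) : f * 0 = 0 := by
  funext w; simp [mul_apply, zero_apply]

private lemma add_mul' (f g h : NCS K) : (f + g) * h = f * h + g * h := by
  funext w
  simp [mul_apply, add_apply, add_mul, Finset.sum_add_distrib]

private lemma mul_add' (f g h : NCS K) : f * (g + h) = f * g + f * h := by
  funext w
  simp [mul_apply, add_apply, mul_add, Finset.sum_add_distrib]

private lemma smul_mul' (c : K) (f g : NCS K) : (c • f) * g = c • (f * g) := by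
  funext w
  simp [mul_apply, smul_apply, Finset.mul_sum, mul_assoc]

private lemma one_mul' (f : NCS K) : 1 * f = f := by
  funext w
  cases w with
  | nil => simp [mul_nil, one_apply]
  | cons a w =>
      have : shift a (1 : NCS K) = 0 := by
        funext v; show (if (a :: v : Word) = [] then (1:K) else 0) = 0; simp
      rw [cons_mul, this, zero_mul', zero_apply, one_apply]
      simp

private lemma mul_one' (f : NCS K) : f * 1 = f := by
  funext w
  induction w generalizing f with
  | nil => simp [mul_nil, one_apply]
  | cons a w ih =>
      rw [cons_mul, one_apply, ih]
      simp [shift]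

private lemma mul_assoc' (f g h : NCS K) : f * g * h = f * (g * h) := by
  funext w
  induction w generalizing f g h with
  | nil =>
      simp only [mul_nil]
      ring
  | cons a w ih =>
      have h1 : shift a (f * g) = f [] • shift a g + shift a f * g := by
        funext v
        show (f * g) (a :: v) = _
        rw [cons_mul]
        rfl
      have e1 : (f * g * h) (a :: w)
          = f [] * g [] * h (a :: w)
            + (f [] * ((shift a g * h) w) + ((shift a f * g) * h) w) := by
        rw [cons_mul, h1, add_mul', smul_mul', mul_nil, add_apply, smul_apply]
      have e2 : (f * (g * h)) (a :: w)
          = f [] * (g [] * h (a :: w) + (shift a g * h) w)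
            + (shift a f * (g * h)) w := by
        rw [cons_mul, cons_mul]
      rw [e1, e2, ih]
      ring

instance instRing : Ring (NCS K) where
  __ := (inferInstance : AddCommGroup (NCS K))
  __ := (inferInstance : Mul (NCS K))
  __ := (inferInstance : One (NCS K))
  left_distrib := mul_add'
  right_distrib := add_mul'
  zero_mul := zero_mul'
  mul_zero := mul_zero'
  mul_assoc := mul_assoc'
  one_mul := one_mul'
  mul_one := mul_one'

/-- The inverse of a noncommutative power series, given by the geometric series
`Σ_k (1-f)^k`.  For `f` with constant coefficient `1` (the only case used) this is
the genuine two-sided multiplicative inverse of `f`. -/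
instance : Inv (NCS K) :=
  ⟨fun f => fun w => ∑ k ∈ Finset.range (w.length + 1), ((1 - f) ^ k) w⟩

/-- The series `e0`. -/
def E0 : NCS K := fun w => if w = [0] then 1 else 0

/-- The series `e1`. -/
def E1 : NCS K := fun w => if w = [1] then 1 else 0

/-- The series `e∞ = -e0 - e1`. -/
def Einf : NCS K := -E0 - E1

/-- The finite set of all words of length at most `n`. -/
def wordsLe (n : ℕ) : Finset Word :=
  (Finset.range (n + 1)).biUnion fun k =>
    Finset.image (fun t : Fin k → Fin 2 => List.ofFn t) Finset.univ

/-- The product of the letters of `w` after the substitution `e0 ↦ a`, `e1 ↦ b`. -/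
def prodWord (a b : NCS K) (w : Word) : NCS K :=
  (w.map fun c => if c = 0 then a else b).prod

/-- Substitution `f(e0,e1) ↦ f(a,b)`: the image of `f` under the continuous algebra
endomorphism determined by `e0 ↦ a`, `e1 ↦ b` (for `a`, `b` with zero constant term). -/
def subst (a b : NCS K) (f : NCS K) : NCS K :=
  fun v => ∑ w ∈ wordsLe v.length, f w * prodWord a b w v

/-- The exponential series `exp a = Σ_k a^k/k!` (for `a` with zero constant term). -/
def expS {K : Type*} [Field K] (a : NCS K) : NCS K :=
  fun w => ∑ k ∈ Finset.range (w.length + 1), (Nat.factorial k : K)⁻¹ * (a ^ k) w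

end NCS

/-- The list of all shuffles of two words. -/
def shuffle : Word → Word → List Word
  | [], v => [v]
  | a :: u, [] => [a :: u]
  | a :: u, b :: v =>
      ((shuffle u (b :: v)).map fun w => a :: w) ++ ((shuffle (a :: u) v).map fun w => b :: w)
termination_by u v => u.length + v.length

namespace NCS

variable {K : Type*} [CommRing K]

/-- `f[u ⧢ v]`: the coefficient function `f` applied linearly to the shuffle `u ⧢ v`. -/
def shufApply (f : NCS K) (u v : Word) : K := ((shuffle u v).map fun w => f w).sum

/-- `f ∈ Π(K)`: group-like elements, i.e. solutions of the shuffle equations with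
constant coefficient `1`. -/
def IsPi (f : NCS K) : Prop :=
  f [] = 1 ∧ ∀ u v : Word, shufApply f u v = f u * f v

/-- `f ∈ Π̃(K)`: elements of `Π(K)` whose weight-one coefficients vanish. -/
def IsPiT (f : NCS K) : Prop := IsPi f ∧ f [0] = 0 ∧ f [1] = 0

end NCS

/-- The block `e0^{k-1} e1`. -/
def blk (k : ℕ) : Word := List.replicate (k - 1) 0 ++ [1]

/-- The word `e0^{s_d-1} e1 e0^{s_{d-1}-1} e1 ⋯ e0^{s_1-1} e1` (only the values
`s 1, …, s d` matter). -/
def wordW (d : ℕ) (s : ℕ → ℕ) : Word :=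
  (List.ofFn fun j : Fin d => blk (s (d - (j : ℕ)))).flatten

/-- The word `e0^{s_d-1} e1 ⋯ e0^{s_1-1} e1 e0^{s_0-1}`. -/
def word1 (d : ℕ) (s : ℕ → ℕ) : Word :=
  wordW d s ++ List.replicate (s 0 - 1) 0

/-- The word `W(a_d; a_{d-1}, …, a_1; a_0) = e0^{a_d} e1 e0^{a_{d-1}} e1 ⋯ e1 e0^{a_1} e1 e0^{a_0}`
of depth `d`. -/
def wordA (d : ℕ) (a : ℕ → ℕ) : Word :=
  List.replicate (a d) 0 ++
    (List.ofFn fun j : Fin d => (1 : Fin 2) :: List.replicate (a (d - 1 - (j : ℕ))) 0).flatten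

/-- `binom (−s, l) = (−1)^l · binom (s+l−1, l)`. -/
def nbinom (s l : ℕ) : ℤ := (-1) ^ l * ((s + l - 1).choose l)

/-- Extension of a tuple `t : Fin d → ℕ` to `ℕ → ℕ` so that index `i ∈ {1, …, d}`
reads `t (i-1)` and all other indices read `0`. -/
def extFin (d : ℕ) (t : Fin d → ℕ) : ℕ → ℕ :=
  fun i => if h : i - 1 < d ∧ 1 ≤ i then t ⟨i - 1, h.1⟩ else 0

namespace NCS

/-- The filtration `Fil_s(C_μ) = Σ_{s1+s2=s} (1/s1!)·ℤ·(μ/2)^{s2}` of `ℚ ⊆ K`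
(`μ ≠ 0` case; for `μ = 0` it reduces to `ℤ ⊆ K`). -/
def Fil {K : Type*} [Field K] (μ : K) (s : ℕ) : Submodule ℤ K :=
  Submodule.span ℤ
    {x : K | ∃ s1 s2 : ℕ, s1 + s2 = s ∧ x = (Nat.factorial s1 : K)⁻¹ * (μ / 2) ^ s2}

variable {K : Type*} [CommRing K]

/-- `M_D(f)`: the ℤ-submodule of `K` generated by the products `f[w_1]⋯f[w_k]`, `k ≥ 1`,
where each `w_j` is a word of depth between `1` and `D`. -/
def Msub (D : ℕ) (f : NCS K) : Submodule ℤ K :=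
  Submodule.span ℤ
    {x : K | ∃ l : List Word, l ≠ [] ∧ (∀ w ∈ l, 1 ≤ depth w ∧ depth w ≤ D) ∧
      x = (l.map fun w => f w).prod}

/-- `M^μ_D(f)`: as `Msub` but with coefficients in the filtration `Fil`. -/
def MsubFil {K : Type*} [Field K] (μ : K) (D : ℕ) (f : NCS K) : Submodule ℤ K :=
  Submodule.span ℤ
    {x : K | ∃ (l : List Word) (c : K), l ≠ [] ∧
      (∀ w ∈ l, 1 ≤ depth w ∧ depth w ≤ D) ∧
      c ∈ Fil μ ((l.map List.length).sum) ∧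
      x = c * (l.map fun w => f w).prod}

/-- The one-dimensional associator equations with `μ = 0`: duality (2-cycle), 3-cycle,
and the special automorphism equation. -/
def OneDim0 (Φ : NCS K) : Prop :=
  Φ * subst E1 E0 Φ = 1 ∧
  subst Einf E0 Φ * subst E1 Einf Φ * Φ = 1 ∧
  E0 + Φ⁻¹ * E1 * Φ + (subst E0 Einf Φ)⁻¹ * Einf * subst E0 Einf Φ = 0

/-- The one-dimensional associator equations with coupling constant `μ ≠ 0`: duality,
hexagon, and the equation of special automorphisms. -/
def OneDimMu {K : Type*} [Field K] (μ : K) (Φ : NCS K) : Prop :=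
  subst E1 E0 Φ = Φ⁻¹ ∧
  expS ((μ / 2) • E0) * subst Einf E0 Φ * expS ((μ / 2) • Einf) *
      subst E1 Einf Φ * expS ((μ / 2) • E1) * Φ = 1 ∧
  Φ⁻¹ * expS ((-μ) • E1) * Φ * expS ((-μ) • E0) =
    expS ((μ / 2) • E0) * (subst E0 Einf Φ)⁻¹ * expS (μ • Einf) *
      subst E0 Einf Φ * expS ((-(μ / 2)) • E0)

end NCS

section Aux
variable {K : Type*} [Field K]

lemma shuffle_nil_left (v : Word) : shuffle [] v = [v] := by rw [shuffle]

lemma shuffle_cons_nil (a : Fin 2) (u : Word) : shuffle (a :: u) [] = [a :: u] := by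
  rw [shuffle]

lemma shuffle_cons_cons (a : Fin 2) (u : Word) (b : Fin 2) (v : Word) :
    shuffle (a :: u) (b :: v) =
      ((shuffle u (b :: v)).map fun w => a :: w) ++
        ((shuffle (a :: u) v).map fun w => b :: w) := by
  rw [shuffle]

lemma shuf_swap_sum : ∀ (w : Word) (f : Word → K),
    ((shuffle w [1]).map f).sum = ((shuffle [1] w).map f).sum := by
  intro w
  induction w with
  | nil => intro f; rw [shuffle_nil_left, shuffle_cons_nil]
  | cons b v ih =>
      intro f
      rw [shuffle_cons_cons, shuffle_cons_cons, shuffle_cons_nil, shuffle_nil_left]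
      simp only [List.map_append, List.sum_append, List.map_map, List.map_cons,
        List.map_nil, List.sum_cons, List.sum_nil]
      rw [ih (f ∘ (b :: ·))]
      simp [add_comm, Function.comp]

lemma key_sum : ∀ (m : ℕ) (w : Word) (f : Word → K),
    ((shuffle (List.replicate m 1 ++ 0 :: w) [1]).map f).sum
      = ((shuffle w [1]).map fun v => f (List.replicate m 1 ++ 0 :: v)).sum
        + ((m : K) + 1) * f (List.replicate (m + 1) 1 ++ 0 :: w) := by
  intro m
  induction m with
  | zero =>
      intro w f
      simp only [List.replicate, List.nil_append, Nat.cast_zero, zero_add]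
      rw [shuffle_cons_cons, shuffle_cons_nil]
      simp [List.map_map, Function.comp]
      rfl
  | succ m ih =>
      intro w f
      have hrep : List.replicate (m + 1) (1 : Fin 2) ++ 0 :: w
          = 1 :: (List.replicate m 1 ++ 0 :: w) := by
        simp [List.replicate_succ]
      rw [hrep, shuffle_cons_cons, shuffle_cons_nil]
      simp only [List.map_append, List.sum_append, List.map_map, List.map_cons,
        List.map_nil, List.sum_cons, List.sum_nil, add_zero]
      rw [show (List.map (f ∘ fun w => (1 : Fin 2) :: w)
          (shuffle (List.replicate m 1 ++ 0 :: w) [1])).sum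
        = ((shuffle (List.replicate m 1 ++ 0 :: w) [1]).map (f ∘ ((1 : Fin 2) :: ·))).sum
        from rfl]
      rw [ih w (f ∘ ((1 : Fin 2) :: ·))]
      have h4 : ((shuffle w [1]).map fun v =>
            (f ∘ ((1 : Fin 2) :: ·)) (List.replicate m 1 ++ 0 :: v)).sum
          = ((shuffle w [1]).map fun v => f (List.replicate (m + 1) 1 ++ 0 :: v)).sum := by
        refine congrArg List.sum (List.map_congr_left ?_)
        intro v _
        simp [List.replicate_succ]
      rw [h4]
      have h5 : (f ∘ ((1 : Fin 2) :: ·)) (List.replicate (m + 1) 1 ++ 0 :: w)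
          = f (List.replicate (m + 1 + 1) 1 ++ 0 :: w) := by
        simp [List.replicate_succ]
      have h6 : f (1 :: (1 :: (List.replicate m 1 ++ 0 :: w)))
          = f (List.replicate (m + 1 + 1) 1 ++ 0 :: w) := by
        simp [List.replicate_succ]
      rw [h5, h6]
      push_cast
      ring

end Aux

open NCS in
/-- the relation satisfied by the coefficients of a series killed by
`⧢ e1` on words with a leading power of `e1`. -/
theorem stmt_1 {K : Type*} [Field K] [CharZero K] (f : NCS K)
    (hf : ∀ w : Word, shufApply f w [1] = 0) :
    ∀ (w : Word) (n : ℕ), 1 ≤ n →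
      (n : K) * f (List.replicate n 1 ++ 0 :: w)
        + ((shuffle [1] w).map fun v => f (List.replicate (n - 1) 1 ++ 0 :: v)).sum
        = 0 := by
  intro w n hn
  obtain ⟨m, rfl⟩ : ∃ m, n = m + 1 := ⟨n - 1, (Nat.succ_pred_eq_of_pos hn).symm⟩
  have h := hf (List.replicate m 1 ++ 0 :: w)
  rw [shufApply, key_sum m w f] at h
  have hswap := shuf_swap_sum w (fun v => f (List.replicate m 1 ++ 0 :: v))
  simp only [Nat.add_sub_cancel]
  push_cast
  rw [← hswap]
  linear_combination h
end

section
/- Let μ ∈ K with μ ≠ 0. If u ∈ K⟨⟨e0,e1⟩⟩ commutes with exp(μe1) = Σ_{k≥0} μ^k e1^k / k!, then u[w] = 0 for every word w containing at least one letter e0; in other words, u is a power series in the single variable e1. -/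
/-!
Write `E = exp(μ e1)`: it is a series in `e1` alone with `E[e1] = μ`. A word containing `e0` is
`e1^a m e1^b` with `m` beginning and ending in `e0`. In the coefficients of `e1^(a+1) m e1^b` in
`uE` and `Eu` the factor `E` can only absorb a block of outer letters `e1`, so `uE = Eu` expresses
`μ · u[e1^a m e1^b]` through coefficients of `u` at `e1^(a+1) m e1^t` with `t < b` and at
`e1^c m e1^b` with `c < a`; induction on `b`, then on `a`, makes them all vanish.
-/

namespace NCS

section SeriesInE1

variable {K : Type*} [CommRing K]

def IsSeriesInE1 (f : NCS K) : Prop := ∀ w : Word, (0 : Fin 2) ∈ w → f w = 0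

namespace IsSeriesInE1

variable {f g : NCS K}

lemma one : IsSeriesInE1 (1 : NCS K) := by
  rintro (_ | ⟨a, w⟩) hw
  · simp at hw
  · simp [one_apply]

lemma e1 : IsSeriesInE1 (E1 : NCS K) := by
  intro w hw
  have : w ≠ [1] := by rintro rfl; simp at hw
  simp [E1, this]

lemma smul (c : K) (hf : IsSeriesInE1 f) : IsSeriesInE1 (c • f) := by
  intro w hw
  rw [smul_apply, hf w hw, mul_zero]

lemma mul (hf : IsSeriesInE1 f) (hg : IsSeriesInE1 g) : IsSeriesInE1 (f * g) := by
  intro w hw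
  refine Finset.sum_eq_zero fun i _ => ?_
  rw [← List.take_append_drop i w, List.mem_append] at hw
  rcases hw with h | h
  · rw [hf _ h, zero_mul]
  · rw [hg _ h, mul_zero]

lemma pow (hf : IsSeriesInE1 f) (n : ℕ) : IsSeriesInE1 (f ^ n) := by
  induction n with
  | zero => simpa using one
  | succ n ih => simpa [pow_succ] using ih.mul hf

lemma shift_one (hf : IsSeriesInE1 f) : IsSeriesInE1 (shift 1 f) :=
  fun w hw => hf (1 :: w) (List.mem_cons_of_mem _ hw)

lemma mul_apply_replicate_append (hf : IsSeriesInE1 f) (g : NCS K) (a : ℕ) {v : Word}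
    (hv : v.head? = some 0) :
    (f * g) (List.replicate a 1 ++ v) =
      ∑ i ∈ Finset.range (a + 1),
        f (List.replicate i 1) * g (List.replicate (a - i) 1 ++ v) := by
  induction a generalizing f with
  | zero =>
    obtain ⟨v, rfl⟩ : ∃ v', v = 0 :: v' := by
      cases v <;> simp_all
    have : shift 0 f = 0 := funext fun w => hf (0 :: w) List.mem_cons_self
    simp [cons_mul, this, zero_apply]
  | succ a ih =>
    rw [List.replicate_succ, List.cons_append, cons_mul, ih hf.shift_one,
      Finset.sum_range_succ' _ (a + 1)]
    simp [shift, List.replicate_succ, add_comm]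

lemma mul_apply_append_replicate (f : NCS K) (hg : IsSeriesInE1 g) {v : Word}
    (hv : v.getLast? = some 0) (b : ℕ) :
    (f * g) (v ++ List.replicate b 1) =
      ∑ t ∈ Finset.range (b + 1),
        f (v ++ List.replicate t 1) * g (List.replicate (b - t) 1) := by
  have hlen : (v ++ List.replicate b 1).length + 1 = v.length + (b + 1) := by
    simp; omega
  rw [mul_apply, hlen, Finset.sum_range_add]
  have hleft : ∀ i ∈ Finset.range v.length,
      f ((v ++ List.replicate b 1).take i) * g ((v ++ List.replicate b 1).drop i) = 0 := by
    intro i hi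
    obtain ⟨p, rfl⟩ := List.getLast?_eq_some_iff.mp hv
    refine mul_eq_zero_of_right _ (hg _ ?_)
    have hi : i ≤ p.length := by simpa [Nat.lt_succ_iff] using hi
    simp [List.drop_append_of_le_length, hi]
  rw [Finset.sum_eq_zero hleft, zero_add]
  refine Finset.sum_congr rfl fun t ht => ?_
  have ht : t ≤ b := Nat.lt_succ_iff.mp (Finset.mem_range.mp ht)
  rw [List.take_length_add_append, List.drop_length_add_append, List.take_replicate,
    List.drop_replicate, min_eq_left ht]

end IsSeriesInE1

lemma exists_eq_replicate_append_zero_cons {w : Word} (hw : (0 : Fin 2) ∈ w) :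
    ∃ a v, w = List.replicate a 1 ++ 0 :: v := by
  induction w with
  | nil => simp at hw
  | cons x w ih =>
    fin_cases x
    · exact ⟨0, w, rfl⟩
    · obtain ⟨a, v, rfl⟩ := ih (by simpa using hw)
      exact ⟨a + 1, v, rfl⟩

lemma exists_eq_replicate_append_append_replicate {w : Word} (hw : (0 : Fin 2) ∈ w) :
    ∃ a m b, w = List.replicate a 1 ++ m ++ List.replicate b 1 ∧
      m.head? = some 0 ∧ m.getLast? = some 0 := by
  obtain ⟨a, v, rfl⟩ := exists_eq_replicate_append_zero_cons hw
  obtain ⟨b, v', hv'⟩ := exists_eq_replicate_append_zero_cons (w := (0 :: v).reverse) (by simp)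
  have hv : 0 :: v = v'.reverse ++ [0] ++ List.replicate b 1 := by
    simpa using congrArg List.reverse hv'
  refine ⟨a, v'.reverse ++ [0], b, by rw [List.append_assoc, ← hv], ?_, by simp⟩
  rcases hr : v'.reverse with _ | ⟨x, r⟩
  · rfl
  · rw [hr, List.cons_append, List.cons_append, List.cons.injEq] at hv
    simp [← hv.1]

variable [NoZeroDivisors K] {E u : NCS K}

lemma apply_replicate_append_append_replicate_eq_zero (hE : IsSeriesInE1 E) (hE1 : E [1] ≠ 0)
    (h : Commute u E) {m : Word} (hm₀ : m.head? = some 0) (hm₁ : m.getLast? = some 0)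
    (b a : ℕ) : u (List.replicate a 1 ++ m ++ List.replicate b 1) = 0 := by
  induction b using Nat.strong_induction_on generalizing a with
  | _ b ihb =>
  induction a using Nat.strong_induction_on with
  | _ a iha =>
  have hlhs : (u * E) (List.replicate (a + 1) 1 ++ m ++ List.replicate b 1) =
      u (List.replicate (a + 1) 1 ++ m ++ List.replicate b 1) * E [] := by
    rw [hE.mul_apply_append_replicate u (by simp [List.getLast?_append, hm₁]),
      Finset.sum_range_succ, Finset.sum_eq_zero fun t ht => ?_, zero_add, Nat.sub_self,
      List.replicate_zero]
    rw [ihb t (Finset.mem_range.mp ht), zero_mul]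
  have hrhs : (E * u) (List.replicate (a + 1) 1 ++ m ++ List.replicate b 1) =
      E [1] * u (List.replicate a 1 ++ m ++ List.replicate b 1) +
        E [] * u (List.replicate (a + 1) 1 ++ m ++ List.replicate b 1) := by
    rw [List.append_assoc,
      hE.mul_apply_replicate_append u (a + 1) (by simp [List.head?_append, hm₀]),
      Finset.sum_range_succ', Finset.sum_range_succ', Finset.sum_eq_zero fun i hi => ?_]
    · simp [List.append_assoc]
    · have hi := Finset.mem_range.mp hi
      rw [← List.append_assoc, iha _ (by omega), mul_zero]
  have hE1u : E [1] * u (List.replicate a 1 ++ m ++ List.replicate b 1) = 0 := by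
    linear_combination hlhs - hrhs - congrFun h.eq _
  exact (mul_eq_zero.mp hE1u).resolve_left hE1

lemma isSeriesInE1_of_commute (hE : IsSeriesInE1 E) (hE1 : E [1] ≠ 0) (h : Commute u E) :
    IsSeriesInE1 u := by
  intro w hw
  obtain ⟨a, m, b, rfl, hm₀, hm₁⟩ := exists_eq_replicate_append_append_replicate hw
  exact apply_replicate_append_append_replicate_eq_zero hE hE1 h hm₀ hm₁ b a

end SeriesInE1

section Field

variable {K : Type*} [Field K]

lemma IsSeriesInE1.expS {f : NCS K} (hf : IsSeriesInE1 f) : IsSeriesInE1 (expS f) :=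
  fun w hw => Finset.sum_eq_zero fun k _ => by rw [hf.pow k w hw, mul_zero]

lemma expS_smul_E1_apply_one (μ : K) : expS (μ • E1 : NCS K) [1] = μ := by
  simp [expS, Finset.sum_range_succ, one_apply, smul_apply, E1]

end Field

end NCS

open NCS in
theorem stmt_4_general {K : Type*} [Field K] (μ : K) (hμ : μ ≠ 0)
    (u : NCS K) (h : u * expS (μ • E1) = expS (μ • E1) * u) :
    ∀ w : Word, (0 : Fin 2) ∈ w → u w = 0 :=
  isSeriesInE1_of_commute (IsSeriesInE1.e1.smul μ).expS (by rwa [expS_smul_E1_apply_one]) h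

open NCS in
/-- a series commuting with `exp (μ e1)`, `μ ≠ 0`, has no coefficient on
words containing the letter `e0`, i.e. it is a power series in `e1` alone. -/
theorem stmt_4 {K : Type*} [Field K] [CharZero K] (μ : K) (hμ : μ ≠ 0)
    (u : NCS K) (h : u * expS (μ • E1) = expS (μ • E1) * u) :
    ∀ w : Word, (0 : Fin 2) ∈ w → u w = 0 :=
  stmt_4_general μ hμ u h
end

section
/- Let f ∈ Π̃(K) and let w be a word of weight n and depth d ≥ 1. Then f⁻¹[w] + f[w] lies in the ℤ-submodule of K generated by the products f[v_k]⋯f[v_1] over all factorizations w = v_k⋯v_1 (concatenation of words) into k ≥ 2 nonempty words. Consequently (since f[e0^m] = 0 for every m ≥ 1), f⁻¹[w] + f[w] lies in the ℤ-submodule of K generated by the products f[v_1]⋯f[v_k] with k ≥ 2, each v_j a word of depth between 1 and d−1, Σ_j depth(v_j) = d and Σ_j weight(v_j) = n. -/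
/-! Since `f[∅] = 1`, the geometric series defining `f⁻¹` gives
`f⁻¹[w] = Σ_k (-1)^k Σ_{w = v_1⋯v_k, v_j ≠ ∅} f[v_1]⋯f[v_k]`; the terms `k = 0, 1` are `0`
and `-f[w]`, and the rest are integer combinations of products over factorizations with
`k ≥ 2` factors. For the depth refinement, a factor of depth `0` is a power `e0^m`, and the shuffle
`e0 ⧢ e0^m = (m+1) e0^{m+1}` forces `f[e0^{m+1}] = 0` in characteristic zero; the remaining
factors all have positive depth, so with at least two of them each has depth at most `d - 1`. -/

lemma List.take_succ_ne_nil_of_lt {α : Type*} {l : List α} {i : ℕ} (hi : i < l.length) :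
    l.take (i + 1) ≠ [] :=
  List.ne_nil_of_length_pos (by simp; omega)

lemma List.lt_sum_of_mem {l : List ℕ} (hpos : ∀ y ∈ l, 1 ≤ y) (hlen : 2 ≤ l.length) {x : ℕ}
    (hx : x ∈ l) : x < l.sum := by
  have hsum := List.sum_erase hx
  have hrest :=
    List.length_le_sum_of_one_le (l.erase x) fun y hy => hpos y (List.mem_of_mem_erase hy)
  rw [List.length_erase_of_mem hx] at hrest
  omega

lemma shuffle_singleton_replicate (a : Fin 2) (m : ℕ) :
    shuffle [a] (List.replicate m a) = List.replicate (m + 1) (List.replicate (m + 1) a) := by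
  induction m with
  | zero => simp [shuffle]
  | succ m ih =>
    rw [List.replicate_succ, shuffle, ih]
    simp [shuffle, List.map_replicate, List.replicate_succ]

lemma eq_replicate_zero_of_depth_eq_zero {v : Word} (hv : depth v = 0) :
    v = List.replicate v.length 0 :=
  List.eq_replicate_iff.2 ⟨rfl, fun b hb => by
    have : b ≠ 1 := fun h => List.count_eq_zero.1 hv (h ▸ hb)
    omega⟩

lemma depth_flatten (l : List Word) : depth l.flatten = (l.map depth).sum :=
  List.count_flatten

namespace NCS

section CommRing

variable {K : Type*} [CommRing K]

lemma sub_apply (f g : NCS K) (w : Word) : (f - g) w = f w - g w := rfl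

lemma neg_apply (f : NCS K) (w : Word) : (-f) w = -f w := rfl

/-- `Σ f[v_1]⋯f[v_k]` over the factorizations `w = v_1⋯v_k` into `k` nonempty words. -/
def factorizationSum (f : NCS K) : ℕ → Word → K
  | 0, w => if w = [] then 1 else 0
  | k + 1, w =>
    ∑ i ∈ Finset.range w.length, f (w.take (i + 1)) * factorizationSum f k (w.drop (i + 1))

lemma factorizationSum_succ (f : NCS K) (k : ℕ) (w : Word) :
    factorizationSum f (k + 1) w =
      ∑ i ∈ Finset.range w.length, f (w.take (i + 1)) * factorizationSum f k (w.drop (i + 1)) :=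
  rfl

lemma factorizationSum_zero_of_ne_nil (f : NCS K) {w : Word} (hw : w ≠ []) :
    factorizationSum f 0 w = 0 :=
  if_neg hw

lemma factorizationSum_one (f : NCS K) {w : Word} (hw : w ≠ []) :
    factorizationSum f 1 w = f w := by
  obtain ⟨m, hm⟩ : ∃ m, w.length = m + 1 := Nat.exists_eq_add_one.2 (List.length_pos_iff.2 hw)
  rw [factorizationSum_succ, hm, Finset.sum_range_succ, Finset.sum_eq_zero fun i hi => ?_]
  · simp [← hm, factorizationSum]
  · have : w.drop (i + 1) ≠ [] := by
      rw [Ne, List.drop_eq_nil_iff]; simp at hi; omega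
    simp [factorizationSum, this]

lemma factorizationSum_congr {f g : NCS K} (hfg : ∀ v : Word, v ≠ [] → f v = g v)
    (k : ℕ) (w : Word) :
    factorizationSum f k w = factorizationSum g k w := by
  induction k generalizing w with
  | zero => rfl
  | succ k ih =>
    refine Finset.sum_congr rfl fun i hi => ?_
    rw [hfg _ (List.take_succ_ne_nil_of_lt (Finset.mem_range.1 hi)), ih]

lemma factorizationSum_neg (f : NCS K) (k : ℕ) (w : Word) :
    factorizationSum (-f) k w = (-1) ^ k * factorizationSum f k w := by
  induction k generalizing w with
  | zero => simp [factorizationSum]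
  | succ k ih =>
    simp only [factorizationSum_succ, ih, Finset.mul_sum]
    refine Finset.sum_congr rfl fun i _ => ?_
    rw [neg_apply]
    ring

lemma pow_apply_eq_factorizationSum {g : NCS K} (hg : g [] = 0) (k : ℕ) (w : Word) :
    (g ^ k) w = factorizationSum g k w := by
  induction k generalizing w with
  | zero => rfl
  | succ k ih =>
    rw [pow_succ', mul_apply, Finset.sum_range_succ', factorizationSum_succ]
    simp [hg, ih]

lemma inv_apply_add_apply {f : NCS K} (hf : f [] = 1) {w : Word} (hw : w ≠ []) :
    f⁻¹ w + f w =
      ∑ k ∈ Finset.Ico 2 (w.length + 1), (-1) ^ k * factorizationSum f k w := by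
  have hpow (k : ℕ) : ((1 - f) ^ k) w = (-1) ^ k * factorizationSum f k w := by
    rw [pow_apply_eq_factorizationSum (by rw [sub_apply, one_apply, if_pos rfl, hf, sub_self]),
      factorizationSum_congr (g := -f) (fun v hv => by
        rw [sub_apply, one_apply, if_neg hv, zero_sub, neg_apply]),
      factorizationSum_neg]
  have hlen : 1 < w.length + 1 := by simpa using List.length_pos_iff.2 hw
  show ∑ k ∈ Finset.range (w.length + 1), ((1 - f) ^ k) w + f w = _
  rw [Finset.range_eq_Ico, Finset.sum_eq_sum_Ico_succ_bot (by omega),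
    Finset.sum_eq_sum_Ico_succ_bot hlen]
  simp only [hpow, factorizationSum_zero_of_ne_nil f hw, factorizationSum_one f hw]
  ring

lemma factorizationSum_mem_span (f : NCS K) (k : ℕ) (w : Word) :
    factorizationSum f k w ∈ Submodule.span ℤ
      {x : K | ∃ l : List Word, l.length = k ∧ (∀ v ∈ l, v ≠ []) ∧
        l.flatten = w ∧ x = (l.map fun v => f v).prod} := by
  induction k generalizing w with
  | zero =>
    by_cases hw : w = []
    · exact Submodule.subset_span ⟨[], rfl, by simp, hw.symm, by simp [factorizationSum, hw]⟩
    · rw [factorizationSum_zero_of_ne_nil f hw]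
      exact Submodule.zero_mem _
  | succ k ih =>
    refine Submodule.sum_mem _ fun i hi => ?_
    have hv := List.take_succ_ne_nil_of_lt (Finset.mem_range.1 hi)
    refine (Submodule.map_span_le (LinearMap.mulLeft ℤ (f (w.take (i + 1)))) _ _).2 ?_
      (Submodule.mem_map_of_mem (ih (w.drop (i + 1))))
    rintro _ ⟨l, hlen, hne, hfl, rfl⟩
    refine Submodule.subset_span
      ⟨w.take (i + 1) :: l, by simp [hlen], ?_, by simp [hfl], by simp⟩
    simpa [hv] using hne

lemma inv_apply_add_apply_mem_span {f : NCS K} (hf : f [] = 1) {w : Word} (hw : w ≠ []) :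
    f⁻¹ w + f w ∈ Submodule.span ℤ
      {x : K | ∃ l : List Word, 2 ≤ l.length ∧ (∀ v ∈ l, v ≠ []) ∧
        l.flatten = w ∧ x = (l.map fun v => f v).prod} := by
  rw [inv_apply_add_apply hf hw]
  refine Submodule.sum_mem _ fun k hk => ?_
  have hsmul : (-1) ^ k * factorizationSum f k w = ((-1 : ℤ) ^ k) • factorizationSum f k w := by
    simp [zsmul_eq_mul]
  rw [hsmul]
  refine Submodule.smul_mem _ _ (Submodule.span_mono ?_ (factorizationSum_mem_span f k w))
  rintro _ ⟨l, rfl, hl⟩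
  exact ⟨l, (Finset.mem_Ico.1 hk).1, hl⟩

end CommRing

section CharZero

variable {K : Type*} [Field K] [CharZero K]

lemma IsPi.apply_replicate_eq_zero {f : NCS K} (hf : IsPi f) {a : Fin 2} (ha : f [a] = 0)
    {m : ℕ} (hm : m ≠ 0) :
    f (List.replicate m a) = 0 := by
  obtain ⟨m, rfl⟩ := Nat.exists_eq_add_one.2 (Nat.pos_of_ne_zero hm)
  have h := hf.2 [a] (List.replicate m a)
  rw [shufApply, shuffle_singleton_replicate, ha, zero_mul, List.map_replicate,
    List.sum_replicate, nsmul_eq_mul] at h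
  exact (mul_eq_zero.1 h).resolve_left (Nat.cast_ne_zero.2 m.succ_ne_zero)

lemma prod_mem_span_depth_of_flatten_eq {f : NCS K}
    (hf : IsPi f) (h0 : f [0] = 0) {w : Word} {l : List Word} (hlen : 2 ≤ l.length)
    (hne : ∀ v ∈ l, v ≠ []) (hw : l.flatten = w) :
    (l.map fun v => f v).prod ∈ Submodule.span ℤ
      {x : K | ∃ l : List Word, 2 ≤ l.length ∧
        (∀ v ∈ l, 1 ≤ depth v ∧ depth v ≤ depth w - 1) ∧
        (l.map depth).sum = depth w ∧ (l.map List.length).sum = w.length ∧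
        x = (l.map fun v => f v).prod} := by
  subst hw
  by_cases hzero : ∃ v ∈ l, depth v = 0
  · obtain ⟨v, hv, hdepth⟩ := hzero
    have hfv : f v = 0 := by
      rw [eq_replicate_zero_of_depth_eq_zero hdepth]
      exact hf.apply_replicate_eq_zero h0 (List.length_pos_iff.2 (hne v hv)).ne'
    rw [List.prod_eq_zero (List.mem_map.2 ⟨v, hv, hfv⟩)]
    exact Submodule.zero_mem _
  · have hpos : ∀ v ∈ l, 1 ≤ depth v :=
      fun v hv => Nat.one_le_iff_ne_zero.2 fun h => hzero ⟨v, hv, h⟩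
    refine Submodule.subset_span ⟨l, hlen, fun v hv => ⟨hpos v hv, ?_⟩,
      (depth_flatten l).symm, List.length_flatten.symm, rfl⟩
    have := List.lt_sum_of_mem (by simpa using hpos) (by simpa using hlen)
      (List.mem_map_of_mem (f := depth) hv)
    rw [depth_flatten]
    omega

end CharZero

end NCS

open NCS in
/-- modulo products of coefficients on shorter factorizations,
the coefficients of `f⁻¹` are the negatives of those of `f`. -/
theorem stmt_8 {K : Type*} [Field K] [CharZero K] (f : NCS K) (hf : IsPiT f)
    (w : Word) (n d : ℕ) (hn : w.length = n) (hd : depth w = d) (hd1 : 1 ≤ d) :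
    (f⁻¹ w + f w ∈ Submodule.span ℤ
        {x : K | ∃ l : List Word, 2 ≤ l.length ∧ (∀ v ∈ l, v ≠ []) ∧
          l.flatten = w ∧ x = (l.map fun v => f v).prod}) ∧
    (f⁻¹ w + f w ∈ Submodule.span ℤ
        {x : K | ∃ l : List Word, 2 ≤ l.length ∧
          (∀ v ∈ l, 1 ≤ depth v ∧ depth v ≤ d - 1) ∧
          (l.map depth).sum = d ∧ (l.map List.length).sum = n ∧
          x = (l.map fun v => f v).prod}) := by
  subst hn hd
  have hw : w ≠ [] := by
    rintro rfl
    simp [depth] at hd1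
  have hfac := inv_apply_add_apply_mem_span hf.1.1 hw
  refine ⟨hfac, Submodule.span_le.2 ?_ hfac⟩
  rintro _ ⟨l, hlen, hne, hfl, rfl⟩
  exact prod_mem_span_depth_of_flatten_eq hf.1 hf.2.1 hlen hne hfl
end
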